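/- arXiv:2404.00522 — 2 statements merged into one kernel-verified Lean document; each statement's English description precedes it below -/
import Mathlib

section
/- Under the linear regression with distribution shift setup, the minimum-norm interpolator trained on source data satisfies the target excess risk upper bound R(θ̂(y), D_t) ≤ 4‖θ*_s − θ*_t‖²_{Σ̃} + 4‖θ*_s − θ̂(Xθ*_s)‖²_{Σ̃} + 2‖θ̂(ε_s)‖²_{Σ̃}, where θ̂(ξ) = Xᵀ(XXᵀ)⁻¹ξ for ξ ∈ ℝⁿ and y = Xθ*_s + ε_s. -/
/-!
Well-specification makes the target residual orthogonal to every function of the covariates, so the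
excess risk of any `θ` is exactly the `Σ̃`-quadratic form of `θ - θ*_t`. The minimum-norm interpolator is
linear in the labels, and `θ̂(y) - θ*_t = (θ*_s - θ*_t) - (θ*_s - θ̂(Xθ*_s)) + θ̂(ε_s)`; the bound follows from
`Q(u + w) ≤ 2 Q(u) + 2 Q(w)` for the nonnegative quadratic form `Q = ‖·‖²_{Σ̃}`, applied twice.
-/

open MeasureTheory Matrix

section QuadraticForm

variable {ι : Type*} [Fintype ι] {M : Matrix ι ι ℝ}

lemma dotProduct_mulVec_add_le (hM : ∀ v, 0 ≤ v ⬝ᵥ M *ᵥ v) (u w : ι → ℝ) :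
    (u + w) ⬝ᵥ M *ᵥ (u + w) ≤ 2 * (u ⬝ᵥ M *ᵥ u) + 2 * (w ⬝ᵥ M *ᵥ w) := by
  have := hM (u - w)
  simp only [mulVec_add, mulVec_sub, add_dotProduct, dotProduct_add, sub_dotProduct,
    dotProduct_sub] at this ⊢
  linarith

lemma dotProduct_mulVec_sub_le (hM : ∀ v, 0 ≤ v ⬝ᵥ M *ᵥ v) (u w : ι → ℝ) :
    (u - w) ⬝ᵥ M *ᵥ (u - w) ≤ 2 * (u ⬝ᵥ M *ᵥ u) + 2 * (w ⬝ᵥ M *ᵥ w) := by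
  simpa [sub_eq_add_neg, mulVec_neg] using dotProduct_mulVec_add_le hM u (-w)

lemma dotProduct_mulVec_add_sub_le (hM : ∀ v, 0 ≤ v ⬝ᵥ M *ᵥ v) (s t b c : ι → ℝ) :
    (b + c - t) ⬝ᵥ M *ᵥ (b + c - t)
      ≤ 4 * ((s - t) ⬝ᵥ M *ᵥ (s - t)) + 4 * ((s - b) ⬝ᵥ M *ᵥ (s - b))
        + 2 * (c ⬝ᵥ M *ᵥ c) := by
  have hsplit : b + c - t = (s - t - (s - b)) + c := by abel
  rw [hsplit]
  linarith [dotProduct_mulVec_add_le hM (s - t - (s - b)) c,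
    dotProduct_mulVec_sub_le hM (s - t) (s - b)]

end QuadraticForm

section LinearPredictor

variable {α ι : Type*} [MeasurableSpace α] [Fintype ι] {μ : Measure α} {x : α → ι → ℝ}

lemma memLp_dotProduct (hx : ∀ i, MemLp (fun a => x a i) 2 μ) (v : ι → ℝ) :
    MemLp (fun a => x a ⬝ᵥ v) 2 μ := by
  simpa [dotProduct] using memLp_finsetSum Finset.univ fun i _ => (hx i).mul_const (v i)

lemma integral_sq_dotProduct (hx : ∀ i, MemLp (fun a => x a i) 2 μ) {S : Matrix ι ι ℝ}
    (hS : ∀ i j, S i j = ∫ a, x a i * x a j ∂μ) (v : ι → ℝ) :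
    ∫ a, (x a ⬝ᵥ v) ^ 2 ∂μ = v ⬝ᵥ S *ᵥ v := by
  have hint : ∀ i j, Integrable (fun a => v i * v j * (x a i * x a j)) μ := fun i j =>
    ((hx i).integrable_mul (hx j)).const_mul _
  have hexpand : ∀ a, (x a ⬝ᵥ v) ^ 2 = ∑ i, ∑ j, v i * v j * (x a i * x a j) := fun a => by
    simp only [dotProduct, sq, Finset.sum_mul_sum]
    exact Finset.sum_congr rfl fun i _ => Finset.sum_congr rfl fun j _ => by ring
  simp only [hexpand]
  rw [integral_finsetSum _ fun i _ => integrable_finsetSum _ fun j _ => hint i j]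
  simp only [dotProduct, mulVec, Finset.mul_sum, hS]
  refine Finset.sum_congr rfl fun i _ => ?_
  rw [integral_finsetSum _ fun j _ => hint i j]
  exact Finset.sum_congr rfl fun j _ => by rw [integral_const_mul]; ring

end LinearPredictor

lemma integral_mul_eq_zero_of_condExp_eq_zero {α : Type*} {m mα : MeasurableSpace α}
    {μ : Measure α} (hm : m ≤ mα) [SigmaFinite (μ.trim hm)] {g r : α → ℝ}
    (hg : StronglyMeasurable[m] g) (hgr : Integrable (g * r) μ) (hr : Integrable r μ)
    (hcond : μ[r | m] =ᵐ[μ] 0) :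
    ∫ a, g a * r a ∂μ = 0 := by
  have hpull : μ[g * r | m] =ᵐ[μ] 0 := by
    filter_upwards [condExp_mul_of_stronglyMeasurable_left hg hgr hr, hcond] with a ha hra
    simp [ha, hra]
  calc ∫ a, g a * r a ∂μ = ∫ a, (μ[g * r | m]) a ∂μ := (integral_condExp hm).symm
    _ = 0 := by simp [integral_congr_ae hpull]

section ExcessRisk

variable {α ι : Type*} [MeasurableSpace α] [Fintype ι]

noncomputable def excessRisk (μ : Measure α) (x : α → ι → ℝ) (y : α → ℝ) (θ θ' : ι → ℝ) : ℝ :=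
  ∫ a, ((y a - x a ⬝ᵥ θ) ^ 2 - (y a - x a ⬝ᵥ θ') ^ 2) ∂μ

variable {μ : Measure α} [IsFiniteMeasure μ] {x : α → ι → ℝ} {y : α → ℝ} {θt : ι → ℝ}

lemma excessRisk_eq_of_condExp_residual_eq_zero (hxm : Measurable x)
    (hx : ∀ i, MemLp (fun a => x a i) 2 μ) (hres : MemLp (fun a => y a - x a ⬝ᵥ θt) 2 μ)
    {S : Matrix ι ι ℝ} (hS : ∀ i j, S i j = ∫ a, x a i * x a j ∂μ)
    (hws : μ[(fun a => y a - x a ⬝ᵥ θt) | MeasurableSpace.comap x inferInstance] =ᵐ[μ] 0)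
    (θ : ι → ℝ) :
    excessRisk μ x y θ θt = (θ - θt) ⬝ᵥ S *ᵥ (θ - θt) := by
  set d := θ - θt
  have hd := memLp_dotProduct hx d
  have hexpand : ∀ a, (y a - x a ⬝ᵥ θ) ^ 2 - (y a - x a ⬝ᵥ θt) ^ 2
      = (x a ⬝ᵥ d) ^ 2 - 2 * ((x a ⬝ᵥ d) * (y a - x a ⬝ᵥ θt)) := fun a => by
    simp only [d, dotProduct_sub]
    ring
  have hcross : Integrable (fun a => (x a ⬝ᵥ d) * (y a - x a ⬝ᵥ θt)) μ := hd.integrable_mul hres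
  have horth : ∫ a, (x a ⬝ᵥ d) * (y a - x a ⬝ᵥ θt) ∂μ = 0 :=
    integral_mul_eq_zero_of_condExp_eq_zero hxm.comap_le
      ((continuous_id.dotProduct continuous_const).measurable.comp
        (comap_measurable x)).stronglyMeasurable
      hcross (hres.integrable one_le_two) hws
  simp only [excessRisk, hexpand]
  rw [integral_sub hd.integrable_sq (hcross.const_mul 2), integral_const_mul,
    horth, integral_sq_dotProduct hx hS]
  ring

end ExcessRisk

theorem mni_target_excess_risk_upper_bound_general
    (n p : ℕ)
    (Dt : Measure ((Fin p → ℝ) × ℝ)) [IsProbabilityMeasure Dt]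
    (θt θs : Fin p → ℝ)
    -- finite second moments
    (hxL2 : ∀ i, MemLp (fun q : (Fin p → ℝ) × ℝ => q.1 i) 2 Dt)
    (hresL2 : MemLp (fun q : (Fin p → ℝ) × ℝ => q.2 - ∑ i, q.1 i * θt i) 2 Dt)
    -- target covariance Σ̃ = E[xxᵀ]
    (covT : Matrix (Fin p) (Fin p) ℝ)
    (hcovT : ∀ i j, covT i j = ∫ q, q.1 i * q.1 j ∂Dt)
    -- well-specified target: E[y − xᵀθ*_t | x] = 0
    (hws : Dt[(fun q : (Fin p → ℝ) × ℝ => q.2 - ∑ i, q.1 i * θt i) |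
        MeasurableSpace.comap Prod.fst inferInstance] =ᵐ[Dt] 0)
    -- training data and noise, Gram matrix invertible
    (X : Matrix (Fin n) (Fin p) ℝ) (ε : Fin n → ℝ) :
    -- R(θ̂(y), D_t) with y = Xθ*_s + ε_s
    (∫ q, ((q.2 - ∑ i, q.1 i *
          (Xᵀ * (X * Xᵀ)⁻¹).mulVec (X.mulVec θs + ε) i) ^ 2
        - (q.2 - ∑ i, q.1 i * θt i) ^ 2) ∂Dt)
      ≤ 4 * ((θs - θt) ⬝ᵥ covT.mulVec (θs - θt))
        + 4 * ((θs - (Xᵀ * (X * Xᵀ)⁻¹).mulVec (X.mulVec θs))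
              ⬝ᵥ covT.mulVec (θs - (Xᵀ * (X * Xᵀ)⁻¹).mulVec (X.mulVec θs)))
        + 2 * ((Xᵀ * (X * Xᵀ)⁻¹).mulVec ε
              ⬝ᵥ covT.mulVec ((Xᵀ * (X * Xᵀ)⁻¹).mulVec ε)) := by
  have hcovT_nonneg : ∀ v, 0 ≤ v ⬝ᵥ covT *ᵥ v := fun v =>
    integral_sq_dotProduct (x := Prod.fst) hxL2 hcovT v ▸ integral_nonneg fun _ => sq_nonneg _
  have hrisk := excessRisk_eq_of_condExp_residual_eq_zero (y := Prod.snd) measurable_fst hxL2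
    hresL2 hcovT hws ((Xᵀ * (X * Xᵀ)⁻¹) *ᵥ (X *ᵥ θs + ε))
  rw [mulVec_add] at hrisk ⊢
  exact hrisk.trans_le (dotProduct_mulVec_add_sub_le hcovT_nonneg θs θt _ _)

/-- **Target excess risk upper bound for the minimum-norm interpolator.**
Under the linear regression with distribution shift setup, with
`θ̂(ξ) = Xᵀ(XXᵀ)⁻¹ξ` and `y = Xθ*_s + ε_s`,
`R(θ̂(y), D_t) ≤ 4‖θ*_s − θ*_t‖²_{Σ̃} + 4‖θ*_s − θ̂(Xθ*_s)‖²_{Σ̃} + 2‖θ̂(ε_s)‖²_{Σ̃}`. -/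
theorem mni_target_excess_risk_upper_bound
    (n p : ℕ) (hnp : n < p)
    (Dt : Measure ((Fin p → ℝ) × ℝ)) [IsProbabilityMeasure Dt]
    (θt θs : Fin p → ℝ)
    -- centered target covariates
    (hcent : ∀ i, ∫ q, q.1 i ∂Dt = 0)
    -- finite second moments
    (hxL2 : ∀ i, MemLp (fun q : (Fin p → ℝ) × ℝ => q.1 i) 2 Dt)
    (hresL2 : MemLp (fun q : (Fin p → ℝ) × ℝ => q.2 - ∑ i, q.1 i * θt i) 2 Dt)
    -- target covariance Σ̃ = E[xxᵀ]
    (covT : Matrix (Fin p) (Fin p) ℝ)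
    (hcovT : ∀ i j, covT i j = ∫ q, q.1 i * q.1 j ∂Dt)
    -- well-specified target: E[y − xᵀθ*_t | x] = 0
    (hws : Dt[(fun q : (Fin p → ℝ) × ℝ => q.2 - ∑ i, q.1 i * θt i) |
        MeasurableSpace.comap Prod.fst inferInstance] =ᵐ[Dt] 0)
    -- training data and noise, Gram matrix invertible
    (X : Matrix (Fin n) (Fin p) ℝ) (ε : Fin n → ℝ)
    (hA : IsUnit (X * Xᵀ)) :
    -- R(θ̂(y), D_t) with y = Xθ*_s + ε_s
    (∫ q, ((q.2 - ∑ i, q.1 i *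
          (Xᵀ * (X * Xᵀ)⁻¹).mulVec (X.mulVec θs + ε) i) ^ 2
        - (q.2 - ∑ i, q.1 i * θt i) ^ 2) ∂Dt)
      ≤ 4 * ((θs - θt) ⬝ᵥ covT.mulVec (θs - θt))
        + 4 * ((θs - (Xᵀ * (X * Xᵀ)⁻¹).mulVec (X.mulVec θs))
              ⬝ᵥ covT.mulVec (θs - (Xᵀ * (X * Xᵀ)⁻¹).mulVec (X.mulVec θs)))
        + 2 * ((Xᵀ * (X * Xᵀ)⁻¹).mulVec ε
              ⬝ᵥ covT.mulVec ((Xᵀ * (X * Xᵀ)⁻¹).mulVec ε)) :=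
  mni_target_excess_risk_upper_bound_general n p Dt θt θs hxL2 hresL2 covT hcovT hws X ε
end

section
/- Let V̲ = (1/(cn)) Σ_{i=1}^p (λ̃_i/λ_i) min(1, λ_i²/(λ_{k+1}²(ρ_k+1)²)) and V̄ = c[(1/n) Σ_{i=1}^k λ̃_i/λ_i + n (Σ_{i>k} λ̃_i λ_i)/(Σ_{i>k} λ_i)²] with c > 1 as in the variance bounds. If b ≥ 1, k is the smallest index ℓ with ρ_ℓ ≥ b (so ρ_k ≥ b and ρ_{k−1} < b), and the λ̃_i are nonnegative and not all zero, then V̲/V̄ ∈ [b^{−2}(1+b)^{−2}/c², 1]. -/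
/-!
Put `θ = λ_{k+1}(ρ_k + 1) = λ_{k+1} + (∑_{i>k} λ_i)/n`, so that the `i`-th weight in `V̲` is
`min(1, (λ_i/θ)²)`. For `i > k` we have `λ_i ≤ θ`, so the tail of `V̲` is exactly
`(∑_{i>k} λ̃_i λ_i)/θ²`. Minimality of `k` (`ρ_{k-1} < b`) and monotonicity of `ℓ ↦ λ_{ℓ+1}(ρ_ℓ + 1)`
give `θ ≤ (1 + b) λ_i` for `i ≤ k`, so the head weights lie in `[(1 + b)⁻², 1]`. Finally
`b ≤ ρ_k` gives `∑_{i>k} λ_i ≤ nθ ≤ (1 + b) ∑_{i>k} λ_i`, so the tail of `V̄` agrees with that of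
`V̲` up to the same factor `(1 + b)²`. Hence `V̲/V̄ ∈ [(1 + b)⁻²/c², 1/c²]`.
-/

open Finset

lemma inv_sq_le_min_one_sq_div {a θ x : ℝ} (ha : 1 ≤ a) (hθ : 0 < θ) (h : θ ≤ a * x) :
    (a ^ 2)⁻¹ ≤ min 1 (x ^ 2 / θ ^ 2) := by
  refine le_min (inv_le_one_of_one_le₀ (one_le_pow₀ ha)) ?_
  rw [inv_le_iff_one_le_mul₀ (by positivity), div_mul_eq_mul_div, le_div_iff₀ (by positivity),
    one_mul, ← mul_pow, mul_comm x]
  exact pow_le_pow_left₀ hθ.le h 2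

lemma ratio_bounds_of_le_of_inv_sq_mul_le {P X a c : ℝ} (hX : 0 < X) (hc : 1 < c)
    (hlow : (a ^ 2)⁻¹ * X ≤ P) (hup : P ≤ X) :
    (a ^ 2)⁻¹ / c ^ 2 ≤ P / (c ^ 2 * X) ∧ P / (c ^ 2 * X) ≤ 1 := by
  have hc2 : 1 ≤ c ^ 2 := one_le_pow₀ hc.le
  constructor
  · rw [div_le_div_iff₀ (by positivity) (by positivity)]
    calc (a ^ 2)⁻¹ * (c ^ 2 * X) = c ^ 2 * ((a ^ 2)⁻¹ * X) := by ring
      _ ≤ c ^ 2 * P := by gcongr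
      _ = P * c ^ 2 := mul_comm _ _
  · rw [div_le_one (by positivity)]
    exact hup.trans (le_mul_of_one_le_left hX.le hc2)

lemma one_div_mul_mul_div_mul_eq {P A T S n c : ℝ} (hn : n ≠ 0) :
    1 / (c * n) * P / (c * (1 / n * A + n * T / S ^ 2)) = P / (c ^ 2 * (A + n ^ 2 * T / S ^ 2)) := by
  rw [show c * (1 / n * A + n * T / S ^ 2) = c / n * (A + n ^ 2 * T / S ^ 2) by field_simp]
  field_simp

section WeightedSum

variable {lam lamt : ℕ → ℝ} {θ : ℝ}

lemma sum_div_mul_min_one_sq_div_eq (s : Finset ℕ) (h : ∀ i ∈ s, 0 < lam i ∧ lam i ≤ θ) :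
    ∑ i ∈ s, lamt i / lam i * min 1 (lam i ^ 2 / θ ^ 2) = (∑ i ∈ s, lamt i * lam i) / θ ^ 2 := by
  rw [sum_div]
  refine sum_congr rfl fun i hi => ?_
  obtain ⟨hpos, hle⟩ := h i hi
  rw [min_eq_right (div_le_one_of_le₀ (pow_le_pow_left₀ hpos.le hle 2) (sq_nonneg θ))]
  field_simp

lemma inv_sq_mul_sum_div_le_sum_div_mul_min_one_sq_div (s : Finset ℕ) {a : ℝ} (ha : 1 ≤ a)
    (hθ : 0 < θ) (h : ∀ i ∈ s, 0 ≤ lamt i / lam i ∧ θ ≤ a * lam i) :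
    (a ^ 2)⁻¹ * ∑ i ∈ s, lamt i / lam i ≤ ∑ i ∈ s, lamt i / lam i * min 1 (lam i ^ 2 / θ ^ 2) := by
  rw [mul_sum]
  refine sum_le_sum fun i hi => ?_
  rw [mul_comm]
  exact mul_le_mul_of_nonneg_left (inv_sq_le_min_one_sq_div ha hθ (h i hi).2) (h i hi).1

lemma sum_div_mul_min_one_sq_div_bounds {n S a : ℝ} {k p : ℕ} (hkp : k ≤ p) (ha : 1 ≤ a)
    (hθ : 0 < θ) (hS : 0 < S) (hSθ : S ≤ n * θ) (hθS : n * θ ≤ a * S)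
    (hpos : ∀ i < p, 0 < lam i) (hnneg : ∀ i < p, 0 ≤ lamt i)
    (hhead : ∀ i < k, θ ≤ a * lam i) (htail : ∀ i ∈ Ico k p, lam i ≤ θ) :
    (a ^ 2)⁻¹ * (∑ i ∈ range k, lamt i / lam i + n ^ 2 * (∑ i ∈ Ico k p, lamt i * lam i) / S ^ 2)
        ≤ ∑ i ∈ range p, lamt i / lam i * min 1 (lam i ^ 2 / θ ^ 2) ∧
      ∑ i ∈ range p, lamt i / lam i * min 1 (lam i ^ 2 / θ ^ 2)
        ≤ ∑ i ∈ range k, lamt i / lam i + n ^ 2 * (∑ i ∈ Ico k p, lamt i * lam i) / S ^ 2 := by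
  have hw : ∀ i ∈ range k, 0 ≤ lamt i / lam i := fun i hi =>
    have hip : i < p := (mem_range.1 hi).trans_le hkp
    div_nonneg (hnneg i hip) (hpos i hip).le
  set T := ∑ i ∈ Ico k p, lamt i * lam i
  have hT : 0 ≤ T := sum_nonneg fun i hi =>
    mul_nonneg (hnneg i (mem_Ico.1 hi).2) (hpos i (mem_Ico.1 hi).2).le
  have hn : 0 < n := pos_of_mul_pos_left (hS.trans_le hSθ) hθ.le
  have htail_eq : T / θ ^ 2 = n ^ 2 * T / (n * θ) ^ 2 := by field_simp
  rw [← sum_range_add_sum_Ico _ hkp, sum_div_mul_min_one_sq_div_eq _ fun i hi =>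
    ⟨hpos i (mem_Ico.1 hi).2, htail i hi⟩, mul_add]
  constructor
  · gcongr ?_ + ?_
    · exact inv_sq_mul_sum_div_le_sum_div_mul_min_one_sq_div _ ha hθ fun i hi =>
        ⟨hw i hi, hhead i (mem_range.1 hi)⟩
    · rw [htail_eq, ← div_eq_inv_mul, div_div, ← mul_pow, mul_comm S]
      gcongr
  · gcongr ?_ + ?_
    · exact sum_le_sum fun i hi => mul_le_of_le_one_right (hw i hi) (min_le_left _ _)
    · rw [htail_eq]
      gcongr

lemma sum_div_add_mul_sum_mul_pos {k p : ℕ} {r : ℝ} (hr : 0 < r) (hkp : k ≤ p)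
    (hpos : ∀ i < p, 0 < lam i) (hnneg : ∀ i < p, 0 ≤ lamt i) (hne : ∃ i < p, lamt i ≠ 0) :
    0 < ∑ i ∈ range k, lamt i / lam i + r * ∑ i ∈ Ico k p, lamt i * lam i := by
  obtain ⟨j, hjp, hj⟩ := hne
  have hj : 0 < lamt j := (hnneg j hjp).lt_of_ne' hj
  have hhead : ∀ i ∈ range k, 0 ≤ lamt i / lam i := fun i hi =>
    have hip : i < p := (mem_range.1 hi).trans_le hkp
    div_nonneg (hnneg i hip) (hpos i hip).le
  have htail : ∀ i ∈ Ico k p, 0 ≤ lamt i * lam i := fun i hi =>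
    mul_nonneg (hnneg i (mem_Ico.1 hi).2) (hpos i (mem_Ico.1 hi).2).le
  rcases lt_or_ge j k with hjk | hkj
  · have := sum_pos' hhead ⟨j, mem_range.2 hjk, div_pos hj (hpos j hjp)⟩
    have := sum_nonneg htail
    positivity
  · have := sum_pos' htail ⟨j, mem_Ico.2 ⟨hkj, hjp⟩, mul_pos hj (hpos j hjp)⟩
    have := sum_nonneg hhead
    positivity

end WeightedSum

/-- Indices are `0`-based: `rho lam n p ℓ` is the paper's `ρ_ℓ`, and `lam ℓ` is its `λ_{ℓ+1}`. -/
noncomputable def rho (lam : ℕ → ℝ) (n p ℓ : ℕ) : ℝ := (∑ i ∈ Ico ℓ p, lam i) / (n * lam ℓ)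

noncomputable def threshold (lam : ℕ → ℝ) (n p ℓ : ℕ) : ℝ := lam ℓ * (rho lam n p ℓ + 1)

section Spectrum

variable {lam : ℕ → ℝ} {n p : ℕ}

lemma mul_threshold (hn : n ≠ 0) {ℓ : ℕ} (hℓ : lam ℓ ≠ 0) :
    n * threshold lam n p ℓ = ∑ i ∈ Ico ℓ p, lam i + n * lam ℓ := by
  unfold threshold rho
  field_simp

lemma rho_nonneg (hpos : ∀ i < p, 0 < lam i) {ℓ : ℕ} (hℓ : ℓ < p) : 0 ≤ rho lam n p ℓ :=
  div_nonneg (sum_nonneg fun i hi => (hpos i (mem_Ico.1 hi).2).le)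
    (mul_nonneg n.cast_nonneg (hpos ℓ hℓ).le)

lemma threshold_le_threshold (hn : n ≠ 0) (hpos : ∀ i < p, 0 < lam i)
    (hmono : ∀ i j, i ≤ j → j < p → lam j ≤ lam i) {ℓ m : ℕ} (hℓm : ℓ ≤ m) (hm : m < p) :
    threshold lam n p m ≤ threshold lam n p ℓ := by
  have hn' : (0 : ℝ) < n := by positivity
  refine le_of_mul_le_mul_left ?_ hn'
  rw [mul_threshold hn (hpos m hm).ne', mul_threshold hn (hpos ℓ (hℓm.trans_lt hm)).ne']
  gcongr ?_ + n * ?_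
  · exact sum_le_sum_of_subset_of_nonneg (Ico_subset_Ico_left hℓm) fun i hi _ =>
      (hpos i (mem_Ico.1 hi).2).le
  · exact hmono ℓ m hℓm hm

lemma threshold_le_one_add_mul_of_lt (hn : n ≠ 0) (hpos : ∀ i < p, 0 < lam i)
    (hmono : ∀ i j, i ≤ j → j < p → lam j ≤ lam i) {k : ℕ} (hkp : k < p) {b : ℝ}
    (hb : rho lam n p (k - 1) < b) {i : ℕ} (hik : i < k) :
    threshold lam n p k ≤ (1 + b) * lam i := by
  have hk : k - 1 < p := (k.sub_le 1).trans_lt hkp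
  calc threshold lam n p k ≤ threshold lam n p (k - 1) :=
        threshold_le_threshold hn hpos hmono (k.sub_le 1) hkp
    _ ≤ lam (k - 1) * (1 + b) := by
        unfold threshold
        exact mul_le_mul_of_nonneg_left (by linarith) (hpos _ hk).le
    _ ≤ (1 + b) * lam i := by
        rw [mul_comm]
        gcongr
        · linarith [rho_nonneg (n := n) hpos hk]
        · exact hmono i (k - 1) (by omega) hk

lemma lam_le_threshold (hpos : ∀ i < p, 0 < lam i) (hmono : ∀ i j, i ≤ j → j < p → lam j ≤ lam i)
    {k i : ℕ} (hi : i ∈ Ico k p) : lam i ≤ threshold lam n p k := by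
  obtain ⟨hki, hip⟩ := mem_Ico.1 hi
  have hkp := hki.trans_lt hip
  calc lam i ≤ lam k := hmono k i hki hip
    _ ≤ threshold lam n p k :=
        le_mul_of_one_le_right (hpos k hkp).le (by linarith [rho_nonneg (n := n) hpos hkp])

lemma sum_Ico_le_mul_threshold (hn : n ≠ 0) (hpos : ∀ i < p, 0 < lam i) {k : ℕ} (hkp : k < p) :
    ∑ i ∈ Ico k p, lam i ≤ n * threshold lam n p k := by
  rw [mul_threshold hn (hpos k hkp).ne']
  exact le_add_of_nonneg_right (mul_nonneg n.cast_nonneg (hpos k hkp).le)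

lemma mul_threshold_le (hn : n ≠ 0) (hpos : ∀ i < p, 0 < lam i) {k : ℕ} (hkp : k < p) {b : ℝ}
    (hb : 1 ≤ b) (hbk : b ≤ rho lam n p k) :
    n * threshold lam n p k ≤ (1 + b) * ∑ i ∈ Ico k p, lam i := by
  have hnk : (0 : ℝ) < n * lam k := mul_pos (by positivity) (hpos k hkp)
  have hbS : b * (n * lam k) ≤ ∑ i ∈ Ico k p, lam i := (le_div_iff₀ hnk).1 hbk
  have hS : 0 ≤ ∑ i ∈ Ico k p, lam i := sum_nonneg fun i hi => (hpos i (mem_Ico.1 hi).2).le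
  rw [mul_threshold hn (hpos k hkp).ne']
  linarith [le_mul_of_one_le_left hnk.le hb, le_mul_of_one_le_left hS hb]

end Spectrum

theorem variance_bounds_tight_general
    (n p k : ℕ) (hn : 1 ≤ n) (hkp : k < p)
    (lam lamt : ℕ → ℝ)
    (hpos : ∀ i, i < p → 0 < lam i)
    (hmono : ∀ i j, i ≤ j → j < p → lam j ≤ lam i)
    (hnneg : ∀ i, i < p → 0 ≤ lamt i)
    (hne : ∃ i, i < p ∧ lamt i ≠ 0)
    (b c : ℝ) (hb : 1 ≤ b) (hc : 1 < c)
    (hrhok : b ≤ (∑ i ∈ Finset.Ico k p, lam i) / (n * lam k))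
    (hrhokm : (∑ i ∈ Finset.Ico (k - 1) p, lam i) / (n * lam (k - 1)) < b) :
    let ρ := (∑ i ∈ Finset.Ico k p, lam i) / (n * lam k)
    let Vlow := (1 / (c * n)) * ∑ i ∈ Finset.range p,
        (lamt i / lam i) * min 1 (lam i ^ 2 / (lam k ^ 2 * (ρ + 1) ^ 2))
    let Vup := c * ((1 / n) * ∑ i ∈ Finset.range k, lamt i / lam i
        + n * (∑ i ∈ Finset.Ico k p, lamt i * lam i)
            / (∑ i ∈ Finset.Ico k p, lam i) ^ 2)
    b⁻¹ ^ 2 * (1 + b)⁻¹ ^ 2 / c ^ 2 ≤ Vlow / Vup ∧ Vlow / Vup ≤ 1 := by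
  intro ρ Vlow Vup
  have hn0 : n ≠ 0 := by omega
  have hθ : 0 < threshold lam n p k :=
    (hpos k hkp).trans_le (lam_le_threshold hpos hmono (left_mem_Ico.2 hkp))
  have hS : 0 < ∑ i ∈ Ico k p, lam i :=
    sum_pos (fun i hi => hpos i (mem_Ico.1 hi).2) (nonempty_Ico.2 hkp)
  obtain ⟨hlow, hup⟩ := sum_div_mul_min_one_sq_div_bounds (lamt := lamt) hkp.le
    (by linarith : 1 ≤ 1 + b) hθ hS (sum_Ico_le_mul_threshold hn0 hpos hkp)
    (mul_threshold_le hn0 hpos hkp hb hrhok) hpos hnneg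
    (fun i hi => threshold_le_one_add_mul_of_lt hn0 hpos hmono hkp hrhokm hi)
    (fun i hi => lam_le_threshold hpos hmono hi)
  have hX := sum_div_add_mul_sum_mul_pos
    (by positivity : 0 < (n : ℝ) ^ 2 / (∑ i ∈ Ico k p, lam i) ^ 2) hkp.le hpos hnneg hne
  rw [← mul_div_right_comm] at hX
  have hmin : lam k ^ 2 * (ρ + 1) ^ 2 = threshold lam n p k ^ 2 := (mul_pow _ _ 2).symm
  simp only [Vlow, Vup, hmin]
  rw [one_div_mul_mul_div_mul_eq (Nat.cast_ne_zero.2 hn0)]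
  obtain ⟨hlower, hupper⟩ := ratio_bounds_of_le_of_inv_sq_mul_le hX hc hlow hup
  refine ⟨le_trans ?_ hlower, hupper⟩
  rw [← inv_pow, ← mul_pow]
  gcongr
  exact mul_le_of_le_one_left (by positivity) (inv_le_one_of_one_le₀ hb)

/-- **Tightness of the variance bounds.**  With `V̲` and `V̄` the lower- and
upper-bound expressions for the variance term (same constant `c > 1` in both),
`b ≥ 1`, and `k` the smallest index `ℓ` with `ρ_ℓ ≥ b` (so `ρ_k ≥ b` and
`ρ_{k−1} < b`), nonnegative target eigenvalues not all zero, one has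
`V̲/V̄ ∈ [b⁻²(1+b)⁻²/c², 1]`.  (0-based indexing: paper's `λ_{ℓ+1}` is `lam ℓ`.) -/
theorem variance_bounds_tight
    (n p k : ℕ) (hn : 1 ≤ n) (hnp : n < p) (hk : 1 ≤ k) (hkp : k < p)
    (lam lamt : ℕ → ℝ)
    (hpos : ∀ i, i < p → 0 < lam i)
    (hmono : ∀ i j, i ≤ j → j < p → lam j ≤ lam i)
    (hnneg : ∀ i, i < p → 0 ≤ lamt i)
    (hne : ∃ i, i < p ∧ lamt i ≠ 0)
    (b c : ℝ) (hb : 1 ≤ b) (hc : 1 < c)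
    (hrhok : b ≤ (∑ i ∈ Finset.Ico k p, lam i) / (n * lam k))
    (hrhokm : (∑ i ∈ Finset.Ico (k - 1) p, lam i) / (n * lam (k - 1)) < b) :
    let ρ := (∑ i ∈ Finset.Ico k p, lam i) / (n * lam k)
    let Vlow := (1 / (c * n)) * ∑ i ∈ Finset.range p,
        (lamt i / lam i) * min 1 (lam i ^ 2 / (lam k ^ 2 * (ρ + 1) ^ 2))
    let Vup := c * ((1 / n) * ∑ i ∈ Finset.range k, lamt i / lam i
        + n * (∑ i ∈ Finset.Ico k p, lamt i * lam i)
            / (∑ i ∈ Finset.Ico k p, lam i) ^ 2)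
    b⁻¹ ^ 2 * (1 + b)⁻¹ ^ 2 / c ^ 2 ≤ Vlow / Vup ∧ Vlow / Vup ≤ 1 :=
  variance_bounds_tight_general n p k hn hkp lam lamt hpos hmono hnneg hne b c hb hc hrhok hrhokm
end
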